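/- arXiv:2305.07875 — 2 statements merged into one kernel-verified Lean document; each statement's English description precedes it below -/
import Mathlib

section
/- Let L = {0,1} and consider a constrained switched linear system (CSS) over L with matrices A_l ∈ ℝ^{n×n}, B_l ∈ ℝ^{n×q}, C_l ∈ ℝ^{p×n}, D_l ∈ ℝ^{p×q}, and let G = (V,E) be a switching graph over L. Suppose γ > 0 and there exist symmetric matrices S_i ∈ ℝ^{n×n} and matrices G_i ∈ ℝ^{n×n} for each node i ∈ V such that for every edge (i,j,l) ∈ E the 4×4 block matrix [[G_i + G_iᵀ − S_i, 0, (A_l G_i)ᵀ, (C_l G_i)ᵀ], [0, γ I_q, B_lᵀ, D_lᵀ], [A_l G_i, B_l, S_j, 0], [C_l G_i, D_l, 0, γ I_p]] is positive definite. Then the CSS has ℓ2-performance with gain γ with respect to the set of switching sequences admissible for G. -/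
/-!
Along an edge `(i, j, l)`, evaluating the LMI at `(a, w, -Sⱼ⁻¹ x⁺, -γ⁻¹ z)`, where `x = Gᵢ a`,
`x⁺ = A x + B w` and `z = C x + D w`, and using `G + Gᵀ - S ≤ Gᵀ S⁻¹ G`, gives the strict
dissipation inequality `Vⱼ(x⁺) + γ⁻¹ |z|² + ε (|a|² + |w|²) ≤ Vᵢ(x) + γ |w|²` for the storage
functions `Vᵢ(x) = xᵀ Sᵢ⁻¹ x`, with `ε > 0` uniform over the finitely many edges. Summed along an
admissible path it shows that `∑ |G⁻¹ x_k|²` converges when `w = 0`, so `x_k → 0`, and that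
`∑ |z_k|² ≤ γ (γ - ε) ∑ |w_k|²` when `x₀ = 0`. The diagonal blocks of the LMI make every `Sᵢ`
positive definite and every `Gᵢ` invertible, as every node has incoming and outgoing edges.
-/

open Matrix Filter Topology

namespace Matrix

variable {ι : Type*} [Fintype ι]

lemma dotProduct_self_nonneg (v : ι → ℝ) : 0 ≤ v ⬝ᵥ v := by
  simpa using dotProduct_self_star_nonneg v

lemma sum_sq_eq_dotProduct_self (v : ι → ℝ) : ∑ i, v i ^ 2 = v ⬝ᵥ v := by
  simp [dotProduct, sq]

lemma sumElim_dotProduct_fromBlocks_mulVec_sumElim {ι₁ ι₂ κ₁ κ₂ : Type*} [Fintype ι₁] [Fintype ι₂]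
    [Fintype κ₁] [Fintype κ₂] (P : Matrix ι₁ κ₁ ℝ) (Q : Matrix ι₁ κ₂ ℝ) (R : Matrix ι₂ κ₁ ℝ)
    (T : Matrix ι₂ κ₂ ℝ) (x : ι₁ → ℝ) (y : ι₂ → ℝ) (x' : κ₁ → ℝ) (y' : κ₂ → ℝ) :
    Sum.elim x y ⬝ᵥ fromBlocks P Q R T *ᵥ Sum.elim x' y'
      = x ⬝ᵥ P *ᵥ x' + x ⬝ᵥ Q *ᵥ y' + y ⬝ᵥ R *ᵥ x' + y ⬝ᵥ T *ᵥ y' := by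
  rw [fromBlocks_mulVec, Sum.elim_comp_inl, Sum.elim_comp_inr, sumElim_dotProduct_sumElim,
    dotProduct_add, dotProduct_add]
  ring

lemma PosDef.two_mul_dotProduct_sub_le [DecidableEq ι] {S : Matrix ι ι ℝ} (hS : S.PosDef)
    (x y : ι → ℝ) : 2 * (x ⬝ᵥ y) - y ⬝ᵥ S *ᵥ y ≤ x ⬝ᵥ S⁻¹ *ᵥ x := by
  have hSym : Sᵀ = S := by simpa using hS.isHermitian.eq
  have hdet : IsUnit S.det := isUnit_iff_ne_zero.mpr hS.det_pos.ne'
  have hsq := hS.inv.posSemidef.dotProduct_mulVec_nonneg (x - S *ᵥ y)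
  have hcross : (S *ᵥ y) ⬝ᵥ S⁻¹ *ᵥ x = x ⬝ᵥ y :=
    calc (S *ᵥ y) ⬝ᵥ S⁻¹ *ᵥ x = (S⁻¹ *ᵥ x) ⬝ᵥ Sᵀ *ᵥ y := by rw [hSym, dotProduct_comm]
      _ = y ⬝ᵥ S *ᵥ S⁻¹ *ᵥ x := dotProduct_transpose_mulVec ..
      _ = x ⬝ᵥ y := by rw [mulVec_mulVec, mul_nonsing_inv S hdet, one_mulVec, dotProduct_comm]
  simp only [star_trivial, mulVec_sub, sub_dotProduct, dotProduct_sub, mulVec_mulVec,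
    nonsing_inv_mul S hdet, one_mulVec, hcross] at hsq
  rw [dotProduct_comm (S *ᵥ y) y] at hsq
  linarith

lemma PosDef.eventually_mul_dotProduct_self_le {M : Matrix ι ι ℝ} (hM : M.PosDef) :
    ∀ᶠ ε in 𝓝[>] 0, ∀ v : ι → ℝ, ε * (v ⬝ᵥ v) ≤ v ⬝ᵥ M *ᵥ v := by
  let f : EuclideanSpace ℝ ι → ℝ := fun x => x.ofLp ⬝ᵥ M *ᵥ x.ofLp
  have hf : Continuous f := by fun_prop
  obtain ⟨ε₀, hε₀, hmin⟩ := (isCompact_sphere (0 : EuclideanSpace ℝ ι) 1).exists_forall_le'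
    hf.continuousOn (a := 0) fun x hx => by
      have hx : x.ofLp ≠ 0 := by
        rintro h; simp only [WithLp.ofLp_eq_zero] at h; simp [h] at hx
      simpa using hM.dotProduct_mulVec_pos hx
  filter_upwards [Ioo_mem_nhdsGT hε₀] with ε hε v
  obtain rfl | hv := eq_or_ne v 0
  · simp
  set x : EuclideanSpace ℝ ι := WithLp.toLp 2 v
  have hr : 0 < ‖x‖ := norm_pos_iff.mpr (by simpa [x] using hv)
  have hvv : v ⬝ᵥ v = ‖x‖ ^ 2 := by
    rw [EuclideanSpace.real_norm_sq_eq]; simp [x, dotProduct, sq]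
  have hu := hmin (‖x‖⁻¹ • x) (by simp [norm_smul, hr.ne'])
  have hfu : f (‖x‖⁻¹ • x) = (‖x‖ ^ 2)⁻¹ * (v ⬝ᵥ M *ᵥ v) := by
    simp [f, x, mulVec_smul]; ring
  rw [hfu, le_inv_mul_iff₀ (by positivity)] at hu
  rw [hvv]
  nlinarith [hε.2]

lemma exists_pos_forall_mul_dotProduct_self_le {T : Type*} [Finite T] {M : T → Matrix ι ι ℝ}
    (hM : ∀ t, (M t).PosDef) :
    ∃ ε > 0, ∀ t, ∀ v : ι → ℝ, ε * (v ⬝ᵥ v) ≤ v ⬝ᵥ M t *ᵥ v :=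
  ((eventually_all.2 fun t => (hM t).eventually_mul_dotProduct_self_le).and
    self_mem_nhdsWithin).exists.imp fun _ h => ⟨h.2, h.1⟩

lemma isUnit_of_posDef_add_transpose_sub [DecidableEq ι] {G S : Matrix ι ι ℝ}
    (hS : S.PosSemidef) (h : (G + Gᵀ - S).PosDef) : IsUnit G := by
  rw [isUnit_iff_isUnit_det, isUnit_iff_ne_zero, Ne, ← exists_mulVec_eq_zero_iff]
  rintro ⟨a, ha, hGa⟩
  have hpos := h.dotProduct_mulVec_pos ha
  have hSa := hS.dotProduct_mulVec_nonneg a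
  simp only [star_trivial, sub_mulVec, add_mulVec, dotProduct_sub, dotProduct_transpose_mulVec,
    hGa, dotProduct_zero, zero_add] at hpos hSa
  linarith

lemma tendsto_zero_of_tendsto_dotProduct_self {y : ℕ → ι → ℝ}
    (h : Tendsto (fun k => y k ⬝ᵥ y k) atTop (𝓝 0)) : Tendsto y atTop (𝓝 0) := by
  refine tendsto_pi_nhds.2 fun i => squeeze_zero_norm (fun k => ?_) (by simpa using h.sqrt)
  refine Real.abs_le_sqrt ?_
  simpa [sq, ← sum_sq_eq_dotProduct_self] using
    Finset.single_le_sum (f := fun j => y k j * y k j) (fun j _ => mul_self_nonneg _)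
      (Finset.mem_univ i)

lemma tendsto_mulVec_of_tendsto_zero {T κ : Type*} [Fintype T] [Fintype κ]
    (M : T → Matrix ι κ ℝ) (t : ℕ → T) {y : ℕ → κ → ℝ} (hy : Tendsto y atTop (𝓝 0)) :
    Tendsto (fun k => M (t k) *ᵥ y k) atTop (𝓝 0) := by
  have hM : ∀ s, Tendsto (fun k => ‖M s *ᵥ y k‖) atTop (𝓝 0) := fun s => by
    simpa using
      (((continuous_const (y := M s)).matrix_mulVec continuous_id).tendsto 0).comp hy |>.norm
  refine squeeze_zero_norm (fun k => ?_)
    (by simpa using tendsto_finsetSum Finset.univ fun s _ => hM s)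
  exact Finset.single_le_sum (f := fun s => ‖M s *ᵥ y k‖) (fun _ _ => norm_nonneg _)
    (Finset.mem_univ (t k))

variable {κ μ : Type*} [DecidableEq κ] [DecidableEq μ]

def lmiMatrix (A : Matrix ι ι ℝ) (B : Matrix ι κ ℝ) (C : Matrix μ ι ℝ) (D : Matrix μ κ ℝ) (γ : ℝ)
    (G Sᵢ Sⱼ : Matrix ι ι ℝ) : Matrix ((ι ⊕ κ) ⊕ (ι ⊕ μ)) ((ι ⊕ κ) ⊕ (ι ⊕ μ)) ℝ :=
  fromBlocks (fromBlocks (G + Gᵀ - Sᵢ) 0 0 (γ • 1)) (fromBlocks (A * G)ᵀ (C * G)ᵀ Bᵀ Dᵀ)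
    (fromBlocks (A * G) B (C * G) D) (fromBlocks Sⱼ 0 0 (γ • 1))

variable {A : Matrix ι ι ℝ} {B : Matrix ι κ ℝ} {C : Matrix μ ι ℝ} {D : Matrix μ κ ℝ} {γ : ℝ}
  {G Sᵢ Sⱼ : Matrix ι ι ℝ}

lemma PosDef.of_lmiMatrix_left (h : (lmiMatrix A B C D γ G Sᵢ Sⱼ).PosDef) :
    (G + Gᵀ - Sᵢ).PosDef := by
  convert h.submatrix (Sum.inl_injective.comp Sum.inl_injective)
  ext; simp [lmiMatrix]

lemma PosDef.of_lmiMatrix_right (h : (lmiMatrix A B C D γ G Sᵢ Sⱼ).PosDef) : Sⱼ.PosDef := by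
  convert h.submatrix (Sum.inr_injective.comp Sum.inl_injective)
  ext; simp [lmiMatrix]

variable [Fintype κ] [Fintype μ]

lemma sumElim_dotProduct_lmiMatrix_mulVec (a : ι → ℝ) (w : κ → ℝ) (c : ι → ℝ) (d : μ → ℝ) :
    Sum.elim (Sum.elim a w) (Sum.elim c d) ⬝ᵥ
        lmiMatrix A B C D γ G Sᵢ Sⱼ *ᵥ Sum.elim (Sum.elim a w) (Sum.elim c d)
      = a ⬝ᵥ (G + Gᵀ - Sᵢ) *ᵥ a + γ * (w ⬝ᵥ w) + 2 * ((A *ᵥ G *ᵥ a + B *ᵥ w) ⬝ᵥ c)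
        + c ⬝ᵥ Sⱼ *ᵥ c + 2 * ((C *ᵥ G *ᵥ a + D *ᵥ w) ⬝ᵥ d) + γ * (d ⬝ᵥ d) := by
  simp only [lmiMatrix, sumElim_dotProduct_fromBlocks_mulVec_sumElim, dotProduct_transpose_mulVec,
    zero_mulVec, dotProduct_zero, smul_mulVec, one_mulVec, dotProduct_smul, smul_eq_mul,
    mulVec_mulVec, add_dotProduct, zero_dotProduct, smul_dotProduct, dotProduct_comm c,
    dotProduct_comm d]
  ring

lemma lmiMatrix_dissipation [DecidableEq ι] (hγ : 0 < γ) (hSᵢ : Sᵢ.PosDef) (hSⱼ : Sⱼ.PosDef)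
    {ε : ℝ} (hε : 0 ≤ ε)
    (hmargin : ∀ v, ε * (v ⬝ᵥ v) ≤ v ⬝ᵥ lmiMatrix A B C D γ G Sᵢ Sⱼ *ᵥ v)
    {a x : ι → ℝ} (hx : G *ᵥ a = x) (w : κ → ℝ) :
    (A *ᵥ x + B *ᵥ w) ⬝ᵥ Sⱼ⁻¹ *ᵥ (A *ᵥ x + B *ᵥ w)
        + γ⁻¹ * ((C *ᵥ x + D *ᵥ w) ⬝ᵥ (C *ᵥ x + D *ᵥ w)) + ε * (a ⬝ᵥ a + w ⬝ᵥ w)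
      ≤ x ⬝ᵥ Sᵢ⁻¹ *ᵥ x + γ * (w ⬝ᵥ w) := by
  subst hx
  set x' := A *ᵥ G *ᵥ a + B *ᵥ w
  set z := C *ᵥ G *ᵥ a + D *ᵥ w
  set c := -(Sⱼ⁻¹ *ᵥ x')
  set d := -(γ⁻¹ • z)
  have hm := hmargin (Sum.elim (Sum.elim a w) (Sum.elim c d))
  rw [sumElim_dotProduct_lmiMatrix_mulVec, sumElim_dotProduct_sumElim, sumElim_dotProduct_sumElim,
    sumElim_dotProduct_sumElim] at hm
  have hcd : ε * (a ⬝ᵥ a + w ⬝ᵥ w) ≤ ε * (a ⬝ᵥ a + w ⬝ᵥ w + (c ⬝ᵥ c + d ⬝ᵥ d)) :=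
    mul_le_mul_of_nonneg_left
      (le_add_of_nonneg_right (add_nonneg (dotProduct_self_nonneg c) (dotProduct_self_nonneg d))) hε
  have hc : 2 * (x' ⬝ᵥ c) + c ⬝ᵥ Sⱼ *ᵥ c = -(x' ⬝ᵥ Sⱼ⁻¹ *ᵥ x') := by
    have hdet : IsUnit Sⱼ.det := isUnit_iff_ne_zero.mpr hSⱼ.det_pos.ne'
    simp only [c, mulVec_neg, dotProduct_neg, neg_neg, mulVec_mulVec,
      mul_nonsing_inv _ hdet, one_mulVec, dotProduct_comm _ x']
    ring
  have hd : 2 * (z ⬝ᵥ d) + γ * (d ⬝ᵥ d) = -(γ⁻¹ * (z ⬝ᵥ z)) := by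
    simp only [d, dotProduct_neg, neg_dotProduct, smul_dotProduct, dotProduct_smul,
      smul_eq_mul]
    field_simp
    ring
  have hG : a ⬝ᵥ (G + Gᵀ - Sᵢ) *ᵥ a ≤ (G *ᵥ a) ⬝ᵥ Sᵢ⁻¹ *ᵥ G *ᵥ a := by
    have := hSᵢ.two_mul_dotProduct_sub_le (G *ᵥ a) a
    simp only [sub_mulVec, add_mulVec, dotProduct_sub, dotProduct_add,
      dotProduct_transpose_mulVec, dotProduct_comm a (G *ᵥ a)]
    linarith
  linarith

end Matrix

section

variable {V : ℕ → ℝ}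

lemma sum_range_add_le_of_forall_succ_add_le {s r : ℕ → ℝ}
    (h : ∀ k, V (k + 1) + s k ≤ V k + r k) (N : ℕ) :
    ∑ k ∈ Finset.range N, s k + V N ≤ V 0 + ∑ k ∈ Finset.range N, r k := by
  have := Finset.sum_le_sum fun k (_ : k ∈ Finset.range N) =>
    show s k ≤ V k - V (k + 1) + r k by linarith [h k]
  rw [Finset.sum_add_distrib, Finset.sum_range_sub'] at this
  linarith

lemma tendsto_zero_of_succ_add_mul_dotProduct_self_le {ι : Type*} [Fintype ι] {y : ℕ → ι → ℝ}
    {ε : ℝ} (hε : 0 < ε) (hV : ∀ k, 0 ≤ V k) (h : ∀ k, V (k + 1) + ε * (y k ⬝ᵥ y k) ≤ V k) :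
    Tendsto y atTop (𝓝 0) := by
  have hbound : ∀ N, ∑ k ∈ Finset.range N, y k ⬝ᵥ y k ≤ V 0 / ε := fun N => by
    have := sum_range_add_le_of_forall_succ_add_le (r := fun _ => 0) (by simpa using h) N
    rw [← Finset.mul_sum, Finset.sum_const_zero] at this
    rw [le_div_iff₀' hε]
    linarith [hV N]
  exact tendsto_zero_of_tendsto_dotProduct_self
    (summable_of_sum_range_le (fun k => dotProduct_self_nonneg _) hbound).tendsto_atTop_zero

lemma tsum_ofReal_lt_of_succ_add_le {Z W : ℕ → ℝ} {γ ε : ℝ} (hγ : 0 < γ) (hε : 0 < ε)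
    (hV₀ : V 0 = 0) (hV : ∀ k, 0 ≤ V k) (hZ : ∀ k, 0 ≤ Z k) (hW : ∀ k, 0 ≤ W k)
    (h : ∀ k, V (k + 1) + (γ⁻¹ * Z k + ε * W k) ≤ V k + γ * W k)
    (hpos : 0 < ∑' k, ENNReal.ofReal (W k)) (hfin : ∑' k, ENNReal.ofReal (W k) < ⊤) :
    ∑' k, ENNReal.ofReal (Z k) < ENNReal.ofReal γ ^ 2 * ∑' k, ENNReal.ofReal (W k) := by
  have hpartial : ∀ N, ∑ k ∈ Finset.range N, Z k
      ≤ γ * (γ - ε) * ∑ k ∈ Finset.range N, W k := fun N => by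
    have := sum_range_add_le_of_forall_succ_add_le h N
    rw [Finset.sum_add_distrib, ← Finset.mul_sum, ← Finset.mul_sum, ← Finset.mul_sum, hV₀] at this
    have := hV N
    rw [mul_assoc, ← div_le_iff₀' hγ, div_eq_inv_mul]
    linarith
  calc ∑' k, ENNReal.ofReal (Z k)
      ≤ ENNReal.ofReal (γ * (γ - ε)) * ∑' k, ENNReal.ofReal (W k) := by
        refine ENNReal.tsum_le_of_sum_range_le fun N => ?_
        rw [← ENNReal.ofReal_sum_of_nonneg fun k _ => hZ k]
        refine (ENNReal.ofReal_le_ofReal (hpartial N)).trans ?_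
        rw [ENNReal.ofReal_mul' (Finset.sum_nonneg fun k _ => hW k),
          ENNReal.ofReal_sum_of_nonneg fun k _ => hW k]
        gcongr
        exact ENNReal.sum_le_tsum _
    _ < ENNReal.ofReal γ ^ 2 * ∑' k, ENNReal.ofReal (W k) := by
        rw [← ENNReal.ofReal_pow hγ.le]
        gcongr
        · exact hfin.ne
        · rw [ENNReal.ofReal_lt_ofReal_iff (by positivity)]
          nlinarith

end

theorem stmt0_general
    (n q p nV : ℕ)
    (A : Fin 2 → Matrix (Fin n) (Fin n) ℝ)
    (B : Fin 2 → Matrix (Fin n) (Fin q) ℝ)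
    (C : Fin 2 → Matrix (Fin p) (Fin n) ℝ)
    (D : Fin 2 → Matrix (Fin p) (Fin q) ℝ)
    (E : Set (Fin nV × Fin nV × Fin 2))
    (hout : ∀ i : Fin nV, ∃ j l, (i, j, l) ∈ E)
    (hin : ∀ j : Fin nV, ∃ i l, (i, j, l) ∈ E)
    (γ : ℝ) (hγ : 0 < γ)
    (S G : Fin nV → Matrix (Fin n) (Fin n) ℝ)
    (hLMI : ∀ i j l, (i, j, l) ∈ E →
      (Matrix.fromBlocks
        (Matrix.fromBlocks (G i + (G i)ᵀ - S i) 0 0 (γ • (1 : Matrix (Fin q) (Fin q) ℝ)))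
        (Matrix.fromBlocks (A l * G i)ᵀ (C l * G i)ᵀ (B l)ᵀ (D l)ᵀ)
        (Matrix.fromBlocks (A l * G i) (B l) (C l * G i) (D l))
        (Matrix.fromBlocks (S j) 0 0 (γ • (1 : Matrix (Fin p) (Fin p) ℝ)))).PosDef) :
    ∀ σ : ℕ → Fin 2,
      (∃ v : ℕ → Fin nV, ∀ k, (v k, v (k + 1), σ k) ∈ E) →
      -- (i) internal (asymptotic) stability for zero performance input
      ((∀ x : ℕ → Fin n → ℝ,
          (∀ k, x (k + 1) = (A (σ k)).mulVec (x k)) →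
          Tendsto x atTop (nhds 0)) ∧
      -- (ii) ℓ2-gain bound for zero initial state
       (∀ (x : ℕ → Fin n → ℝ) (w : ℕ → Fin q → ℝ) (z : ℕ → Fin p → ℝ),
          x 0 = 0 →
          (∀ k, x (k + 1) = (A (σ k)).mulVec (x k) + (B (σ k)).mulVec (w k)) →
          (∀ k, z k = (C (σ k)).mulVec (x k) + (D (σ k)).mulVec (w k)) →
          0 < ∑' k, ENNReal.ofReal (∑ i, (w k i) ^ 2) →
          (∑' k, ENNReal.ofReal (∑ i, (w k i) ^ 2)) < ⊤ →
          (∑' k, ENNReal.ofReal (∑ i, (z k i) ^ 2)) <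
            ENNReal.ofReal γ ^ 2 * ∑' k, ENNReal.ofReal (∑ i, (w k i) ^ 2))) := by
  rintro σ ⟨v, hv⟩
  have hS : ∀ j, (S j).PosDef := fun j =>
    let ⟨i, l, h⟩ := hin j
    PosDef.of_lmiMatrix_right (hLMI i j l h)
  have hG : ∀ i, IsUnit (G i) := fun i =>
    let ⟨j, l, h⟩ := hout i
    isUnit_of_posDef_add_transpose_sub (hS i).posSemidef (PosDef.of_lmiMatrix_left (hLMI i j l h))
  obtain ⟨ε, hε, hmargin⟩ := exists_pos_forall_mul_dotProduct_self_le
    (M := fun e : E => lmiMatrix (A e.1.2.2) (B e.1.2.2) (C e.1.2.2) (D e.1.2.2) γ (G e.1.1)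
      (S e.1.1) (S e.1.2.1)) fun e => hLMI _ _ _ e.2
  have hGG : ∀ i (x : Fin n → ℝ), G i *ᵥ (G i)⁻¹ *ᵥ x = x := fun i x => by
    rw [mulVec_mulVec, mul_nonsing_inv _ ((isUnit_iff_isUnit_det _).mp (hG i)), one_mulVec]
  have hstep : ∀ k (x : Fin n → ℝ) (w : Fin q → ℝ),
      (A (σ k) *ᵥ x + B (σ k) *ᵥ w) ⬝ᵥ (S (v (k + 1)))⁻¹ *ᵥ (A (σ k) *ᵥ x + B (σ k) *ᵥ w)
        + γ⁻¹ * ((C (σ k) *ᵥ x + D (σ k) *ᵥ w) ⬝ᵥ (C (σ k) *ᵥ x + D (σ k) *ᵥ w))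
        + ε * ((G (v k))⁻¹ *ᵥ x ⬝ᵥ (G (v k))⁻¹ *ᵥ x + w ⬝ᵥ w)
      ≤ x ⬝ᵥ (S (v k))⁻¹ *ᵥ x + γ * (w ⬝ᵥ w) := fun k x w =>
    lmiMatrix_dissipation hγ (hS _) (hS _) hε.le (hmargin ⟨_, hv k⟩) (hGG _ x) w
  have hV : ∀ k y, 0 ≤ y ⬝ᵥ (S (v k))⁻¹ *ᵥ y := fun k y => by
    simpa using (hS (v k)).inv.posSemidef.dotProduct_mulVec_nonneg y
  refine ⟨fun x hx => ?_, fun x w z hx0 hx hz hpos hfin => ?_⟩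
  · have ha : Tendsto (fun k => (G (v k))⁻¹ *ᵥ x k) atTop (𝓝 0) :=
      tendsto_zero_of_succ_add_mul_dotProduct_self_le hε (fun k => hV k (x k)) fun k => by
        have := hstep k (x k) 0
        simp only [mulVec_zero, add_zero, dotProduct_zero, mul_zero, ← hx] at this
        linarith [mul_nonneg (inv_pos.2 hγ).le (dotProduct_self_nonneg (C (σ k) *ᵥ x k))]
    simpa [hGG] using tendsto_mulVec_of_tendsto_zero G v ha
  · simp only [sum_sq_eq_dotProduct_self] at hpos hfin ⊢
    refine tsum_ofReal_lt_of_succ_add_le (V := fun k => x k ⬝ᵥ (S (v k))⁻¹ *ᵥ x k) hγ hε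
      (by simp [hx0]) (fun k => hV k _) (fun k => dotProduct_self_nonneg _)
      (fun k => dotProduct_self_nonneg _) (fun k => ?_) hpos hfin
    have := hstep k (x k) (w k)
    rw [← hx, ← hz] at this
    linarith [mul_nonneg hε.le (dotProduct_self_nonneg ((G (v k))⁻¹ *ᵥ x k))]

/-- ℓ2-performance analysis for a constrained switched linear system
over the label set L = {0,1}, whose switching is constrained by a graph. -/
theorem stmt0
    (n q p nV : ℕ)
    (A : Fin 2 → Matrix (Fin n) (Fin n) ℝ)
    (B : Fin 2 → Matrix (Fin n) (Fin q) ℝ)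
    (C : Fin 2 → Matrix (Fin p) (Fin n) ℝ)
    (D : Fin 2 → Matrix (Fin p) (Fin q) ℝ)
    (E : Set (Fin nV × Fin nV × Fin 2))
    (hout : ∀ i : Fin nV, ∃ j l, (i, j, l) ∈ E)
    (hin : ∀ j : Fin nV, ∃ i l, (i, j, l) ∈ E)
    (γ : ℝ) (hγ : 0 < γ)
    (S G : Fin nV → Matrix (Fin n) (Fin n) ℝ)
    (hSsymm : ∀ i, (S i).IsSymm)
    (hLMI : ∀ i j l, (i, j, l) ∈ E →
      (Matrix.fromBlocks
        (Matrix.fromBlocks (G i + (G i)ᵀ - S i) 0 0 (γ • (1 : Matrix (Fin q) (Fin q) ℝ)))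
        (Matrix.fromBlocks (A l * G i)ᵀ (C l * G i)ᵀ (B l)ᵀ (D l)ᵀ)
        (Matrix.fromBlocks (A l * G i) (B l) (C l * G i) (D l))
        (Matrix.fromBlocks (S j) 0 0 (γ • (1 : Matrix (Fin p) (Fin p) ℝ)))).PosDef) :
    ∀ σ : ℕ → Fin 2,
      (∃ v : ℕ → Fin nV, ∀ k, (v k, v (k + 1), σ k) ∈ E) →
      -- (i) internal (asymptotic) stability for zero performance input
      ((∀ x : ℕ → Fin n → ℝ,
          (∀ k, x (k + 1) = (A (σ k)).mulVec (x k)) →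
          Tendsto x atTop (nhds 0)) ∧
      -- (ii) ℓ2-gain bound for zero initial state
       (∀ (x : ℕ → Fin n → ℝ) (w : ℕ → Fin q → ℝ) (z : ℕ → Fin p → ℝ),
          x 0 = 0 →
          (∀ k, x (k + 1) = (A (σ k)).mulVec (x k) + (B (σ k)).mulVec (w k)) →
          (∀ k, z k = (C (σ k)).mulVec (x k) + (D (σ k)).mulVec (w k)) →
          0 < ∑' k, ENNReal.ofReal (∑ i, (w k i) ^ 2) →
          (∑' k, ENNReal.ofReal (∑ i, (w k i) ^ 2)) < ⊤ →
          (∑' k, ENNReal.ofReal (∑ i, (z k i) ^ 2)) <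
            ENNReal.ofReal γ ^ 2 * ∑' k, ENNReal.ofReal (∑ i, (w k i) ^ 2))) :=
  stmt0_general n q p nV A B C D E hout hin γ hγ S G hLMI
end

section
/- Consider the WHRT control system with zero strategy and its lifted matrices: for l ∈ ℕ, Ã_l = A^{l+1}, B̃_l = A^l B, B̃^w_l = [A^l B^w, A^{l−1} B^w, …, B^w] ∈ ℝ^{n×(l+1)q}, C̃_l = col(C, CA, …, CA^l) ∈ ℝ^{(l+1)p×n}, D̃_l = col(D, CB, CAB, …, CA^{l−1}B) ∈ ℝ^{(l+1)p×m}, and D̃^w_l ∈ ℝ^{(l+1)p×(l+1)q} the block lower-triangular matrix whose (i,j) block (0 ≤ j ≤ i ≤ l) equals D^w if i = j and C A^{i−j−1} B^w if i > j, and is zero above the block diagonal. Let M be a set of loss sequences μ : ℕ → {0,1}, each with μ_0 = 1 and infinitely many k with μ_k = 1, and for μ ∈ M let τ(μ) enumerate {k : μ_k = 1} increasingly and α_m(μ) := τ_{m+1} − τ_m − 1; assume α_m(μ) ≤ s−1 for all m and all μ ∈ M. Then for any γ > 0, the WHRT control system with zero strategy has ℓ2-performance with gain γ with respect to M if and only if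 the lifted constrained switched system x̃_{k+1} = (Ã_{σ_k} + B̃_{σ_k} K) x̃_k + B̃^w_{σ_k} w̃_k, z̃_k = (C̃_{σ_k} + D̃_{σ_k} K) x̃_k + D̃^w_{σ_k} w̃_k has ℓ2-performance with gain γ with respect to the set of switching sequences {α(μ) : μ ∈ M}. -/
open Matrix Filter Topology

/-! Lifted matrices of the WHRT control system with zero strategy.
Block vectors in ℝ^{(l+1)q} are modelled as functions on `Fin (l+1) × Fin q`. -/

/-- Ã_l = A^{l+1} -/
noncomputable def liftA {n : ℕ} (A : Matrix (Fin n) (Fin n) ℝ) (l : ℕ) :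
    Matrix (Fin n) (Fin n) ℝ := A ^ (l + 1)

/-- B̃_l = A^l B -/
noncomputable def liftB {n m : ℕ} (A : Matrix (Fin n) (Fin n) ℝ)
    (B : Matrix (Fin n) (Fin m) ℝ) (l : ℕ) : Matrix (Fin n) (Fin m) ℝ := A ^ l * B

/-- B̃^w_l = [A^l B^w, A^{l−1} B^w, …, B^w] -/
noncomputable def liftBw {n q : ℕ} (A : Matrix (Fin n) (Fin n) ℝ)
    (Bw : Matrix (Fin n) (Fin q) ℝ) (l : ℕ) :
    Matrix (Fin n) (Fin (l + 1) × Fin q) ℝ :=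
  fun r jc => (A ^ (l - (jc.1 : ℕ)) * Bw) r jc.2

/-- C̃_l = col(C, CA, …, CA^l) -/
noncomputable def liftC {n p : ℕ} (A : Matrix (Fin n) (Fin n) ℝ)
    (C : Matrix (Fin p) (Fin n) ℝ) (l : ℕ) :
    Matrix (Fin (l + 1) × Fin p) (Fin n) ℝ :=
  fun ir c => (C * A ^ (ir.1 : ℕ)) ir.2 c

/-- D̃_l = col(D, CB, CAB, …, CA^{l−1}B)  (zero strategy) -/
noncomputable def liftD {n m p : ℕ} (A : Matrix (Fin n) (Fin n) ℝ)
    (B : Matrix (Fin n) (Fin m) ℝ) (C : Matrix (Fin p) (Fin n) ℝ)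
    (D : Matrix (Fin p) (Fin m) ℝ) (l : ℕ) :
    Matrix (Fin (l + 1) × Fin p) (Fin m) ℝ :=
  fun ir c => if (ir.1 : ℕ) = 0 then D ir.2 c else (C * A ^ ((ir.1 : ℕ) - 1) * B) ir.2 c

/-- D̃^w_l : block lower-triangular, block (i,j) is D^w if i = j,
C A^{i−j−1} B^w if i > j, and 0 if i < j. -/
noncomputable def liftDw {n q p : ℕ} (A : Matrix (Fin n) (Fin n) ℝ)
    (Bw : Matrix (Fin n) (Fin q) ℝ) (C : Matrix (Fin p) (Fin n) ℝ)
    (Dw : Matrix (Fin p) (Fin q) ℝ) (l : ℕ) :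
    Matrix (Fin (l + 1) × Fin p) (Fin (l + 1) × Fin q) ℝ :=
  fun ir jc =>
    if (ir.1 : ℕ) = (jc.1 : ℕ) then Dw ir.2 jc.2
    else if (jc.1 : ℕ) < (ir.1 : ℕ) then
      (C * A ^ ((ir.1 : ℕ) - (jc.1 : ℕ) - 1) * Bw) ir.2 jc.2
    else 0

/-- τ(μ): increasing enumeration of the set of successful control attempts {k : μ_k = 1}. -/
noncomputable def tauSeq (μ : ℕ → Fin 2) : ℕ → ℕ := Nat.nth (fun k => μ k = 1)

/-- α_m(μ) = τ_{m+1} − τ_m − 1 : number of losses between consecutive successes. -/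
noncomputable def alphaSeq (μ : ℕ → Fin 2) (m : ℕ) : ℕ :=
  tauSeq μ (m + 1) - tauSeq μ m - 1

open Finset

/-!
Cut the time axis at the successful attempts `τ 0 = 0 < τ 1 < ⋯`. Inside the block
`[τ N, τ (N + 1))` the first step is closed loop and the remaining `α N` are open loop, so the
states and outputs of the block are affine in `x (τ N)` and the inputs of the block, with exactly
the lifted matrices for `σ N = α N`. Since the blocks partition `ℕ`, sampling the state at the
`τ N` and grouping the signals into blocks is a correspondence between trajectories of the two
systems that preserves ℓ2-energies. It carries stability of the original system to the lifted
one, and back because without inputs `x (τ N + i) = Φ i (x (τ N))`, where `Φ 0 = 1`,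
`Φ (i + 1) = A ^ i (A + B K)` and `i ≤ s - 1` ranges over a finite set.
-/

section Blocks

variable {τ a : ℕ → ℕ}

lemma strictMono_of_succ_eq_add (hτ : ∀ m, τ (m + 1) = τ m + a m + 1) : StrictMono τ :=
  strictMono_nat_of_lt_succ fun m => by rw [hτ]; omega

variable (τ a) in
def blockPos (x : Σ m, Fin (a m + 1)) : ℕ := τ x.1 + x.2

lemma blockPos_lt (hτ : ∀ m, τ (m + 1) = τ m + a m + 1) {m m' : ℕ} (h : m < m')
    (i : Fin (a m + 1)) (j : ℕ) : blockPos τ a ⟨m, i⟩ < τ m' + j := by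
  simp only [blockPos]
  have : τ (m + 1) ≤ τ m' := (strictMono_of_succ_eq_add hτ).monotone h
  have := hτ m
  omega

lemma blockPos_injective (hτ : ∀ m, τ (m + 1) = τ m + a m + 1) :
    Function.Injective (blockPos τ a) := by
  rintro ⟨m, i⟩ ⟨m', i'⟩ h
  rcases lt_trichotomy m m' with hlt | rfl | hgt
  · exact absurd h (blockPos_lt hτ hlt i i').ne
  · have : i = i' := Fin.ext (by simpa [blockPos] using h)
    rw [this]
  · exact absurd h (blockPos_lt hτ hgt i' i).ne'

lemma blockPos_surjective (hτ0 : τ 0 = 0) (hτ : ∀ m, τ (m + 1) = τ m + a m + 1) :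
    Function.Surjective (blockPos τ a) := by
  intro k
  induction k with
  | zero => exact ⟨⟨0, 0⟩, by simp [blockPos, hτ0]⟩
  | succ k ih =>
    obtain ⟨⟨m, i⟩, rfl⟩ := ih
    by_cases hi : (i : ℕ) < a m
    · exact ⟨⟨m, ⟨i + 1, by omega⟩⟩, by simp only [blockPos]; omega⟩
    · exact ⟨⟨m + 1, 0⟩, by simp only [blockPos, hτ, Fin.val_zero]; omega⟩

noncomputable def blockEquiv (hτ0 : τ 0 = 0) (hτ : ∀ m, τ (m + 1) = τ m + a m + 1) :
    (Σ m, Fin (a m + 1)) ≃ ℕ :=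
  Equiv.ofBijective (blockPos τ a) ⟨blockPos_injective hτ, blockPos_surjective hτ0 hτ⟩

lemma blockEquiv_apply (hτ0 : τ 0 = 0) (hτ : ∀ m, τ (m + 1) = τ m + a m + 1)
    (x : Σ m, Fin (a m + 1)) : blockEquiv hτ0 hτ x = τ x.1 + x.2 := rfl

lemma tendsto_blockEquiv_symm_fst (hτ0 : τ 0 = 0) (hτ : ∀ m, τ (m + 1) = τ m + a m + 1) :
    Tendsto (fun k => ((blockEquiv hτ0 hτ).symm k).1) atTop atTop := by
  refine tendsto_atTop_atTop.2 fun M => ⟨τ M, fun k hk => ?_⟩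
  obtain ⟨⟨m, i⟩, rfl⟩ := (blockEquiv hτ0 hτ).surjective k
  rw [Equiv.symm_apply_apply]
  by_contra! hm
  exact hk.not_gt (blockPos_lt hτ hm i 0)

lemma tsum_eq_tsum_sum_blocks (hτ0 : τ 0 = 0) (hτ : ∀ m, τ (m + 1) = τ m + a m + 1)
    (F : ℕ → ENNReal) : ∑' k, F k = ∑' m, ∑ i : Fin (a m + 1), F (τ m + i) := by
  rw [← (blockEquiv hτ0 hτ).tsum_eq, ENNReal.tsum_sigma']
  exact tsum_congr fun m => tsum_fintype _

end Blocks

noncomputable def energy {d : ℕ → Type*} [∀ k, Fintype (d k)] (w : (k : ℕ) → d k → ℝ) :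
    ENNReal :=
  ∑' k, ENNReal.ofReal (∑ i, w k i ^ 2)

def L2GainLT {d e : ℕ → Type*} [∀ k, Fintype (d k)] [∀ k, Fintype (e k)] (γ : ℝ)
    (w : (k : ℕ) → d k → ℝ) (z : (k : ℕ) → e k → ℝ) : Prop :=
  0 < energy w → energy w < ⊤ → energy z < ENNReal.ofReal γ ^ 2 * energy w

lemma energy_eq_energy_blocks {τ a : ℕ → ℕ} (hτ0 : τ 0 = 0)
    (hτ : ∀ m, τ (m + 1) = τ m + a m + 1) {ι : Type*} [Fintype ι] (w : ℕ → ι → ℝ) :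
    energy w = energy fun m (jc : Fin (a m + 1) × ι) => w (τ m + jc.1) jc.2 := by
  rw [energy, energy, tsum_eq_tsum_sum_blocks hτ0 hτ]
  refine tsum_congr fun m => ?_
  rw [Fintype.sum_prod_type, ENNReal.ofReal_sum_of_nonneg
    fun _ _ => Finset.sum_nonneg fun _ _ => sq_nonneg _]

section LossSequence

variable {μ : ℕ → Fin 2}

lemma tauSeq_zero (h0 : μ 0 = 1) : tauSeq μ 0 = 0 := by
  rw [tauSeq, Nat.nth_zero]
  exact Nat.sInf_eq_zero.2 (Or.inl h0)

lemma tauSeq_strictMono (hinf : {k | μ k = 1}.Infinite) : StrictMono (tauSeq μ) :=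
  Nat.nth_strictMono hinf

lemma tauSeq_succ (hinf : {k | μ k = 1}.Infinite) (m : ℕ) :
    tauSeq μ (m + 1) = tauSeq μ m + alphaSeq μ m + 1 := by
  have := tauSeq_strictMono hinf (by omega : m < m + 1)
  unfold alphaSeq
  omega

lemma apply_tauSeq (hinf : {k | μ k = 1}.Infinite) (m : ℕ) : μ (tauSeq μ m) = 1 :=
  Nat.nth_mem_of_infinite hinf m

lemma eq_zero_of_tauSeq_lt_of_lt (hinf : {k | μ k = 1}.Infinite) {m k : ℕ}
    (h1 : tauSeq μ m < k) (h2 : k < tauSeq μ (m + 1)) : μ k = 0 := by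
  by_contra h
  obtain ⟨j, hj⟩ : k ∈ Set.range (tauSeq μ) := by
    rw [tauSeq, Nat.range_nth_of_infinite hinf]
    exact Fin.eq_one_of_ne_zero _ h
  exact (tauSeq_strictMono hinf).monotone.ne_of_lt_of_lt_nat m h1 h2 j hj

lemma apply_tauSeq_add_eq_zero (hinf : {k | μ k = 1}.Infinite) (N : ℕ) {t : ℕ}
    (ht0 : 0 < t) (ht : t < alphaSeq μ N + 1) : μ (tauSeq μ N + t) = 0 := by
  have := tauSeq_succ hinf N
  exact eq_zero_of_tauSeq_lt_of_lt hinf (m := N) (by omega) (by omega)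

end LossSequence

/-- The lifted signal `w̃ N = (w (τ N), …, w (τ N + α N))`. -/
noncomputable def liftSeq (μ : ℕ → Fin 2) {ι : Type*} (w : ℕ → ι → ℝ) :
    (N : ℕ) → Fin (alphaSeq μ N + 1) × ι → ℝ :=
  fun N jc => w (tauSeq μ N + jc.1) jc.2

lemma energy_liftSeq {μ : ℕ → Fin 2} (h0 : μ 0 = 1) (hinf : {k | μ k = 1}.Infinite)
    {ι : Type*} [Fintype ι] (w : ℕ → ι → ℝ) : energy (liftSeq μ w) = energy w :=
  (energy_eq_energy_blocks (tauSeq_zero h0) (tauSeq_succ hinf) w).symm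

/-- The state transition from `τ N` to `τ N + i` in the absence of inputs. -/
def blockTransition {n : ℕ} (A F : Matrix (Fin n) (Fin n) ℝ) : ℕ → Matrix (Fin n) (Fin n) ℝ
  | 0 => 1
  | i + 1 => A ^ i * (A + F)

section Dynamics

variable {n m q p : ℕ} (A : Matrix (Fin n) (Fin n) ℝ) (B : Matrix (Fin n) (Fin m) ℝ)
  (Bw : Matrix (Fin n) (Fin q) ℝ) (C : Matrix (Fin p) (Fin n) ℝ)
  (D : Matrix (Fin p) (Fin m) ℝ) (Dw : Matrix (Fin p) (Fin q) ℝ)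
  (K : Matrix (Fin m) (Fin n) ℝ)

lemma liftA_add_liftB_mul (l : ℕ) :
    liftA A l + liftB A B l * K = blockTransition A (B * K) (l + 1) := by
  rw [liftA, liftB, blockTransition, pow_succ, Matrix.mul_add, Matrix.mul_assoc]

lemma liftBw_mulVec (l : ℕ) (u : ℕ → Fin q → ℝ) :
    liftBw A Bw l *ᵥ (fun jc : Fin (l + 1) × Fin q => u jc.1 jc.2) =
      ∑ t ∈ range (l + 1), (A ^ (l - t) * Bw) *ᵥ u t := by
  ext r
  simp only [mulVec, dotProduct, liftBw, Fintype.sum_prod_type, Finset.sum_apply]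
  exact Fin.sum_univ_eq_sum_range (fun t => ∑ c, (A ^ (l - t) * Bw) r c * u t c) (l + 1)

lemma liftBw_zero (l : ℕ) : liftBw A (0 : Matrix (Fin n) (Fin q) ℝ) l = 0 := by
  ext
  simp [liftBw]

lemma liftC_add_liftD_mul_mulVec (l : ℕ) (v : Fin n → ℝ) (i : Fin (l + 1)) (r : Fin p) :
    ((liftC A C l + liftD A B C D l * K) *ᵥ v) (i, r) =
      (C *ᵥ (blockTransition A (B * K) i *ᵥ v) + (if (i : ℕ) = 0 then (D * K) *ᵥ v else 0)) r := by
  have hrow : (fun r c => (liftC A C l + liftD A B C D l * K) (i, r) c) =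
      C * blockTransition A (B * K) i + if (i : ℕ) = 0 then D * K else 0 := by
    obtain ⟨_ | i, _⟩ := i
    · ext r c
      simp [liftC, liftD, blockTransition, Matrix.mul_apply, Matrix.one_apply]
    · have : C * blockTransition A (B * K) (i + 1) = C * A ^ (i + 1) + C * A ^ i * B * K := by
        simp only [blockTransition, Matrix.mul_add, pow_succ, Matrix.mul_assoc]
      ext r c
      simp [liftC, liftD, this, Matrix.mul_apply]
  change ((fun r c => (liftC A C l + liftD A B C D l * K) (i, r) c) *ᵥ v) r = _
  rw [hrow, add_mulVec, mulVec_mulVec]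
  split_ifs <;> simp

lemma liftDw_mulVec (l : ℕ) (u : ℕ → Fin q → ℝ) (i : Fin (l + 1)) (r : Fin p) :
    (liftDw A Bw C Dw l *ᵥ (fun jc : Fin (l + 1) × Fin q => u jc.1 jc.2)) (i, r) =
      (C *ᵥ ∑ t ∈ range i, (A ^ (i - 1 - t) * Bw) *ᵥ u t + Dw *ᵥ u i) r := by
  have hblock : ∀ j : Fin (l + 1), ∑ c, liftDw A Bw C Dw l (i, r) (j, c) * u j c =
      (if (j : ℕ) = i then (Dw *ᵥ u j) r else 0) +
        if (j : ℕ) < i then ((C * A ^ ((i : ℕ) - 1 - j) * Bw) *ᵥ u j) r else 0 := by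
    intro j
    rw [Nat.sub_right_comm]
    by_cases hij : (j : ℕ) = i
    · simp [liftDw, hij, mulVec, dotProduct]
    · by_cases hji : (j : ℕ) < i <;> simp [liftDw, Ne.symm hij, hij, hji, mulVec, dotProduct]
  have hfilter : (range (l + 1)).filter (· < (i : ℕ)) = range i := by
    ext t; simp only [mem_filter, mem_range]; omega
  calc (liftDw A Bw C Dw l *ᵥ (fun jc : Fin (l + 1) × Fin q => u jc.1 jc.2)) (i, r)
      = ∑ j : Fin (l + 1), ∑ c, liftDw A Bw C Dw l (i, r) (j, c) * u j c := by
        rw [mulVec, dotProduct, Fintype.sum_prod_type]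
    _ = _ := by
      rw [Finset.sum_congr rfl fun j _ => hblock j, Finset.sum_add_distrib,
        Fin.sum_univ_eq_sum_range (fun t => if t = (i : ℕ) then (Dw *ᵥ u t) r else 0),
        Fin.sum_univ_eq_sum_range
          (fun t => if t < (i : ℕ) then ((C * A ^ (i - 1 - t) * Bw) *ᵥ u t) r else 0),
        Finset.sum_ite_eq', if_pos (mem_range.2 i.isLt), ← Finset.sum_filter, hfilter]
      simp [mulVec_sum, Finset.sum_apply, mulVec_mulVec, Matrix.mul_assoc, add_comm]

end Dynamics

section Block

variable {n q : ℕ} {A F : Matrix (Fin n) (Fin n) ℝ} {Bw : Matrix (Fin n) (Fin q) ℝ}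
  {μ : ℕ → Fin 2} {x : ℕ → Fin n → ℝ} {w : ℕ → Fin q → ℝ}

lemma mul_blockTransition_succ (j : ℕ) :
    A * blockTransition A F (j + 1) = blockTransition A F (j + 2) := by
  simp only [blockTransition, ← Matrix.mul_assoc, ← pow_succ']

lemma state_within_block
    (hx : ∀ k, x (k + 1) = A *ᵥ x k + ((μ k : ℕ) : ℝ) • F *ᵥ x k + Bw *ᵥ w k)
    {k₀ L : ℕ} (hk₀ : μ k₀ = 1) (hloss : ∀ t, 0 < t → t < L → μ (k₀ + t) = 0)
    {i : ℕ} (hi : i ≤ L) :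
    x (k₀ + i) = blockTransition A F i *ᵥ x k₀ +
      ∑ t ∈ range i, (A ^ (i - 1 - t) * Bw) *ᵥ w (k₀ + t) := by
  induction i with
  | zero => simp [blockTransition]
  | succ i ih =>
    rcases i with _ | j
    · simp [hx, hk₀, blockTransition, add_mulVec]
    · have hA : ∀ t ∈ range (j + 1), A *ᵥ ((A ^ (j - t) * Bw) *ᵥ w (k₀ + t)) =
          (A ^ (j + 1 - t) * Bw) *ᵥ w (k₀ + t) := fun t ht => by
        rw [mulVec_mulVec, ← Matrix.mul_assoc, ← pow_succ', Nat.sub_add_comm (by simpa using ht)]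
      calc x (k₀ + (j + 2))
          = A *ᵥ x (k₀ + (j + 1)) + Bw *ᵥ w (k₀ + (j + 1)) := by
            rw [show k₀ + (j + 2) = k₀ + (j + 1) + 1 by omega, hx,
              hloss (j + 1) (by omega) (by omega)]
            simp
        _ = blockTransition A F (j + 2) *ᵥ x k₀ +
            (∑ t ∈ range (j + 1), (A ^ (j + 1 - t) * Bw) *ᵥ w (k₀ + t) +
              Bw *ᵥ w (k₀ + (j + 1))) := by
            rw [ih (by omega), mulVec_add, mulVec_mulVec, mul_blockTransition_succ, mulVec_sum,
              Nat.add_sub_cancel, Finset.sum_congr rfl hA, add_assoc]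
        _ = _ := by simp [sum_range_succ]

lemma output_within_block {p : ℕ} {C : Matrix (Fin p) (Fin n) ℝ}
    {G : Matrix (Fin p) (Fin n) ℝ} {Dw : Matrix (Fin p) (Fin q) ℝ} {z : ℕ → Fin p → ℝ}
    (hx : ∀ k, x (k + 1) = A *ᵥ x k + ((μ k : ℕ) : ℝ) • F *ᵥ x k + Bw *ᵥ w k)
    (hz : ∀ k, z k = C *ᵥ x k + ((μ k : ℕ) : ℝ) • G *ᵥ x k + Dw *ᵥ w k)
    {k₀ L : ℕ} (hk₀ : μ k₀ = 1) (hloss : ∀ t, 0 < t → t < L → μ (k₀ + t) = 0)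
    {i : ℕ} (hi : i < L) :
    z (k₀ + i) = C *ᵥ (blockTransition A F i *ᵥ x k₀ +
        ∑ t ∈ range i, (A ^ (i - 1 - t) * Bw) *ᵥ w (k₀ + t)) +
      (if i = 0 then G *ᵥ x k₀ else 0) + Dw *ᵥ w (k₀ + i) := by
  rw [hz, ← state_within_block hx hk₀ hloss hi.le]
  rcases i with _ | j
  · simp [hk₀]
  · simp [hloss (j + 1) (by omega) hi]

end Block

section Lift

variable {n m q p : ℕ} {A : Matrix (Fin n) (Fin n) ℝ} {B : Matrix (Fin n) (Fin m) ℝ}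
  {Bw : Matrix (Fin n) (Fin q) ℝ} {C : Matrix (Fin p) (Fin n) ℝ}
  {D : Matrix (Fin p) (Fin m) ℝ} {Dw : Matrix (Fin p) (Fin q) ℝ}
  {K : Matrix (Fin m) (Fin n) ℝ} {μ : ℕ → Fin 2} {x : ℕ → Fin n → ℝ} {w : ℕ → Fin q → ℝ}

lemma apply_tauSeq_succ_eq_lift (hinf : {k | μ k = 1}.Infinite)
    (hx : ∀ k, x (k + 1) = A *ᵥ x k + ((μ k : ℕ) : ℝ) • (B * K) *ᵥ x k + Bw *ᵥ w k) (N : ℕ) :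
    x (tauSeq μ (N + 1)) = (liftA A (alphaSeq μ N) + liftB A B (alphaSeq μ N) * K) *ᵥ
      x (tauSeq μ N) + liftBw A Bw (alphaSeq μ N) *ᵥ liftSeq μ w N := by
  rw [tauSeq_succ hinf, add_assoc, state_within_block hx (apply_tauSeq hinf N)
    (fun t => apply_tauSeq_add_eq_zero hinf N) le_rfl, liftA_add_liftB_mul]
  unfold liftSeq
  rw [liftBw_mulVec A Bw _ fun t => w (tauSeq μ N + t), Nat.add_sub_cancel]

lemma liftSeq_eq_lift_output {z : ℕ → Fin p → ℝ} (hinf : {k | μ k = 1}.Infinite)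
    (hx : ∀ k, x (k + 1) = A *ᵥ x k + ((μ k : ℕ) : ℝ) • (B * K) *ᵥ x k + Bw *ᵥ w k)
    (hz : ∀ k, z k = C *ᵥ x k + ((μ k : ℕ) : ℝ) • (D * K) *ᵥ x k + Dw *ᵥ w k) (N : ℕ) :
    liftSeq μ z N = (liftC A C (alphaSeq μ N) + liftD A B C D (alphaSeq μ N) * K) *ᵥ
      x (tauSeq μ N) + liftDw A Bw C Dw (alphaSeq μ N) *ᵥ liftSeq μ w N := by
  ext ⟨i, r⟩
  unfold liftSeq
  simp only [Pi.add_apply]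
  rw [liftC_add_liftD_mul_mulVec, liftDw_mulVec A Bw C Dw _ (fun t => w (tauSeq μ N + t)),
    output_within_block hx hz (apply_tauSeq hinf N)
      (fun t => apply_tauSeq_add_eq_zero hinf N) i.isLt]
  simp only [mulVec_add, Pi.add_apply]
  ring

end Lift

lemma exists_seq_succ_eq {E : Type*} (x₀ : E) (f : ℕ → E → E) :
    ∃ x : ℕ → E, x 0 = x₀ ∧ ∀ k, x (k + 1) = f k (x k) :=
  ⟨fun k => Nat.rec x₀ f k, rfl, fun _ => rfl⟩

lemma tendsto_zero_of_eq_mulVec_comp {ι κ : Type*} [Fintype ι] [Fintype κ] {L : ℕ}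
    (P : ℕ → Matrix κ ι ℝ) {x : ℕ → κ → ℝ} {y : ℕ → ι → ℝ} {b : ℕ → ℕ}
    (hy : Tendsto y atTop (𝓝 0)) (hb : Tendsto b atTop atTop)
    (hx : ∀ k, ∃ i ≤ L, x k = P i *ᵥ y (b k)) : Tendsto x atTop (𝓝 0) := by
  let Y : ℕ → Fin (L + 1) → κ → ℝ := fun N i => P i *ᵥ y N
  have hY : Tendsto Y atTop (𝓝 0) := tendsto_pi_nhds.2 fun i =>
    ((continuous_const.matrix_mulVec continuous_id).tendsto' 0 0 (by simp)).comp hy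
  refine squeeze_zero_norm (fun k => ?_) (tendsto_zero_iff_norm_tendsto_zero.1 (hY.comp hb))
  obtain ⟨i, hi, hxk⟩ := hx k
  rw [hxk]
  exact norm_le_pi_norm (Y (b k)) ⟨i, by omega⟩

def WhrtStable {n : ℕ} (A F : Matrix (Fin n) (Fin n) ℝ) (μ : ℕ → Fin 2) : Prop :=
  ∀ x : ℕ → Fin n → ℝ, (∀ k, x (k + 1) = A *ᵥ x k + ((μ k : ℕ) : ℝ) • F *ᵥ x k) →
    Tendsto x atTop (𝓝 0)

def WhrtL2Gain {n q p : ℕ} (A F : Matrix (Fin n) (Fin n) ℝ) (Bw : Matrix (Fin n) (Fin q) ℝ)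
    (C G : Matrix (Fin p) (Fin n) ℝ) (Dw : Matrix (Fin p) (Fin q) ℝ) (μ : ℕ → Fin 2)
    (γ : ℝ) : Prop :=
  ∀ (x : ℕ → Fin n → ℝ) (w : ℕ → Fin q → ℝ) (z : ℕ → Fin p → ℝ), x 0 = 0 →
    (∀ k, x (k + 1) = A *ᵥ x k + ((μ k : ℕ) : ℝ) • F *ᵥ x k + Bw *ᵥ w k) →
    (∀ k, z k = C *ᵥ x k + ((μ k : ℕ) : ℝ) • G *ᵥ x k + Dw *ᵥ w k) → L2GainLT γ w z

def LiftedStable {n m : ℕ} (A : Matrix (Fin n) (Fin n) ℝ) (B : Matrix (Fin n) (Fin m) ℝ)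
    (K : Matrix (Fin m) (Fin n) ℝ) (σ : ℕ → ℕ) : Prop :=
  ∀ x : ℕ → Fin n → ℝ, (∀ k, x (k + 1) = (liftA A (σ k) + liftB A B (σ k) * K) *ᵥ x k) →
    Tendsto x atTop (𝓝 0)

def LiftedL2Gain {n m q p : ℕ} (A : Matrix (Fin n) (Fin n) ℝ) (B : Matrix (Fin n) (Fin m) ℝ)
    (Bw : Matrix (Fin n) (Fin q) ℝ) (C : Matrix (Fin p) (Fin n) ℝ)
    (D : Matrix (Fin p) (Fin m) ℝ) (Dw : Matrix (Fin p) (Fin q) ℝ)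
    (K : Matrix (Fin m) (Fin n) ℝ) (σ : ℕ → ℕ) (γ : ℝ) : Prop :=
  ∀ (x : ℕ → Fin n → ℝ) (w : (k : ℕ) → Fin (σ k + 1) × Fin q → ℝ)
    (z : (k : ℕ) → Fin (σ k + 1) × Fin p → ℝ), x 0 = 0 →
    (∀ k, x (k + 1) = (liftA A (σ k) + liftB A B (σ k) * K) *ᵥ x k +
      liftBw A Bw (σ k) *ᵥ w k) →
    (∀ k, z k = (liftC A C (σ k) + liftD A B C D (σ k) * K) *ᵥ x k +
      liftDw A Bw C Dw (σ k) *ᵥ w k) → L2GainLT γ w z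

section Equivalence

variable {n m q p : ℕ} {A : Matrix (Fin n) (Fin n) ℝ} {B : Matrix (Fin n) (Fin m) ℝ}
  {Bw : Matrix (Fin n) (Fin q) ℝ} {C : Matrix (Fin p) (Fin n) ℝ}
  {D : Matrix (Fin p) (Fin m) ℝ} {Dw : Matrix (Fin p) (Fin q) ℝ}
  {K : Matrix (Fin m) (Fin n) ℝ} {μ : ℕ → Fin 2} {γ : ℝ}

lemma liftedStable_of_whrtStable (h0 : μ 0 = 1) (hinf : {k | μ k = 1}.Infinite)
    (H : WhrtStable A (B * K) μ) : LiftedStable A B K (alphaSeq μ) := by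
  intro xt hxt
  obtain ⟨x, hx0, hx⟩ :=
    exists_seq_succ_eq (xt 0) fun k y => A *ᵥ y + ((μ k : ℕ) : ℝ) • (B * K) *ᵥ y
  have hx' : ∀ k, x (k + 1) = A *ᵥ x k + ((μ k : ℕ) : ℝ) • (B * K) *ᵥ x k +
      (0 : Matrix (Fin n) (Fin 0) ℝ) *ᵥ (0 : ℕ → Fin 0 → ℝ) k := by simp [hx]
  have hsample : ∀ N, x (tauSeq μ N) = xt N := by
    intro N
    induction N with
    | zero => rw [tauSeq_zero h0, hx0]
    | succ N ih => simp [apply_tauSeq_succ_eq_lift hinf hx' N, liftBw_zero, ih, hxt]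
  exact ((H x hx).comp (tauSeq_strictMono hinf).tendsto_atTop).congr hsample

lemma whrtStable_of_liftedStable {L : ℕ} (h0 : μ 0 = 1) (hinf : {k | μ k = 1}.Infinite)
    (hα : ∀ j, alphaSeq μ j ≤ L) (H : LiftedStable A B K (alphaSeq μ)) :
    WhrtStable A (B * K) μ := by
  intro x hx
  have hx' : ∀ k, x (k + 1) = A *ᵥ x k + ((μ k : ℕ) : ℝ) • (B * K) *ᵥ x k +
      (0 : Matrix (Fin n) (Fin 0) ℝ) *ᵥ (0 : ℕ → Fin 0 → ℝ) k := by simp [hx]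
  let e := blockEquiv (tauSeq_zero h0) (tauSeq_succ hinf)
  refine tendsto_zero_of_eq_mulVec_comp (L := L) (blockTransition A (B * K))
    (H (fun N => x (tauSeq μ N)) fun N => by
      simpa [liftBw_zero] using apply_tauSeq_succ_eq_lift hinf hx' N)
    (tendsto_blockEquiv_symm_fst (tauSeq_zero h0) (tauSeq_succ hinf)) fun k => ?_
  obtain ⟨⟨N, i⟩, rfl⟩ := e.surjective k
  refine ⟨i, (Nat.le_of_lt_succ i.isLt).trans (hα N), ?_⟩
  rw [Equiv.symm_apply_apply, blockEquiv_apply]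
  simpa using state_within_block hx' (apply_tauSeq hinf N)
    (fun t => apply_tauSeq_add_eq_zero hinf N) i.isLt.le

lemma liftedL2Gain_of_whrtL2Gain (h0 : μ 0 = 1) (hinf : {k | μ k = 1}.Infinite)
    (H : WhrtL2Gain A (B * K) Bw C (D * K) Dw μ γ) :
    LiftedL2Gain A B Bw C D Dw K (alphaSeq μ) γ := by
  intro xt wt zt hxt0 hxt hzt
  let e := blockEquiv (tauSeq_zero h0) (tauSeq_succ hinf)
  let w : ℕ → Fin q → ℝ := fun k c => wt (e.symm k).1 ((e.symm k).2, c)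
  have hw : liftSeq μ w = wt := by
    funext N jc
    have : e.symm (tauSeq μ N + jc.1) = ⟨N, jc.1⟩ := e.symm_apply_eq.2 rfl
    simp only [liftSeq, w]
    rw [this]
  obtain ⟨x, hx0, hx⟩ :=
    exists_seq_succ_eq 0 fun k y => A *ᵥ y + ((μ k : ℕ) : ℝ) • (B * K) *ᵥ y + Bw *ᵥ w k
  let z : ℕ → Fin p → ℝ := fun k => C *ᵥ x k + ((μ k : ℕ) : ℝ) • (D * K) *ᵥ x k + Dw *ᵥ w k
  have hsample : ∀ N, x (tauSeq μ N) = xt N := by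
    intro N
    induction N with
    | zero => rw [tauSeq_zero h0, hx0, hxt0]
    | succ N ih => rw [apply_tauSeq_succ_eq_lift hinf hx N, ih, hw, hxt]
  have hz : liftSeq μ z = zt := funext fun N => by
    rw [liftSeq_eq_lift_output hinf hx (fun _ => rfl), hsample, hw, hzt]
  have := H x w z hx0 hx fun _ => rfl
  rwa [L2GainLT, ← energy_liftSeq h0 hinf w, ← energy_liftSeq h0 hinf z, hw, hz] at this

lemma whrtL2Gain_of_liftedL2Gain (h0 : μ 0 = 1) (hinf : {k | μ k = 1}.Infinite)
    (H : LiftedL2Gain A B Bw C D Dw K (alphaSeq μ) γ) :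
    WhrtL2Gain A (B * K) Bw C (D * K) Dw μ γ := by
  intro x w z hx0 hx hz
  have := H (fun N => x (tauSeq μ N)) (liftSeq μ w) (liftSeq μ z) (by rwa [tauSeq_zero h0])
    (apply_tauSeq_succ_eq_lift hinf hx) (liftSeq_eq_lift_output hinf hx hz)
  rwa [L2GainLT, energy_liftSeq h0 hinf w, energy_liftSeq h0 hinf z] at this

end Equivalence

theorem stmt5_general
    (n m q p s : ℕ)
    (A : Matrix (Fin n) (Fin n) ℝ) (B : Matrix (Fin n) (Fin m) ℝ)
    (Bw : Matrix (Fin n) (Fin q) ℝ) (C : Matrix (Fin p) (Fin n) ℝ)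
    (D : Matrix (Fin p) (Fin m) ℝ) (Dw : Matrix (Fin p) (Fin q) ℝ)
    (K : Matrix (Fin m) (Fin n) ℝ)
    (M : Set (ℕ → Fin 2))
    (hM : ∀ μ ∈ M, μ 0 = 1 ∧ {k | μ k = 1}.Infinite ∧ ∀ j, alphaSeq μ j ≤ s - 1)
    (γ : ℝ) :
    -- the WHRT control system with zero strategy has ℓ2-performance with gain γ w.r.t. M
    ((∀ μ ∈ M,
      (∀ x : ℕ → Fin n → ℝ,
          (∀ k, x (k + 1) =
            A.mulVec (x k) + ((μ k : ℕ) : ℝ) • (B * K).mulVec (x k)) →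
          Tendsto x atTop (nhds 0)) ∧
      (∀ (x : ℕ → Fin n → ℝ) (w : ℕ → Fin q → ℝ) (z : ℕ → Fin p → ℝ),
          x 0 = 0 →
          (∀ k, x (k + 1) =
            A.mulVec (x k) + ((μ k : ℕ) : ℝ) • (B * K).mulVec (x k) + Bw.mulVec (w k)) →
          (∀ k, z k =
            C.mulVec (x k) + ((μ k : ℕ) : ℝ) • (D * K).mulVec (x k) + Dw.mulVec (w k)) →
          0 < ∑' k, ENNReal.ofReal (∑ i, (w k i) ^ 2) →
          (∑' k, ENNReal.ofReal (∑ i, (w k i) ^ 2)) < ⊤ →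
          (∑' k, ENNReal.ofReal (∑ i, (z k i) ^ 2)) <
            ENNReal.ofReal γ ^ 2 * ∑' k, ENNReal.ofReal (∑ i, (w k i) ^ 2))))
    ↔
    -- the lifted constrained switched system has ℓ2-performance with gain γ
    -- w.r.t. the set of switching sequences {α(μ) : μ ∈ M}
    (∀ σ : ℕ → ℕ, (∃ μ ∈ M, σ = alphaSeq μ) →
      (∀ x : ℕ → Fin n → ℝ,
          (∀ k, x (k + 1) =
            (liftA A (σ k) + liftB A B (σ k) * K).mulVec (x k)) →
          Tendsto x atTop (nhds 0)) ∧
      (∀ (x : ℕ → Fin n → ℝ)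
          (w : (k : ℕ) → Fin (σ k + 1) × Fin q → ℝ)
          (z : (k : ℕ) → Fin (σ k + 1) × Fin p → ℝ),
          x 0 = 0 →
          (∀ k, x (k + 1) =
            (liftA A (σ k) + liftB A B (σ k) * K).mulVec (x k) +
            (liftBw A Bw (σ k)).mulVec (w k)) →
          (∀ k, z k =
            (liftC A C (σ k) + liftD A B C D (σ k) * K).mulVec (x k) +
            (liftDw A Bw C Dw (σ k)).mulVec (w k)) →
          0 < ∑' k, ENNReal.ofReal (∑ i, (w k i) ^ 2) →
          (∑' k, ENNReal.ofReal (∑ i, (w k i) ^ 2)) < ⊤ →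
          (∑' k, ENNReal.ofReal (∑ i, (z k i) ^ 2)) <
            ENNReal.ofReal γ ^ 2 * ∑' k, ENNReal.ofReal (∑ i, (w k i) ^ 2))) := by
  constructor
  · rintro H σ ⟨μ, hμ, rfl⟩
    obtain ⟨h0, hinf, -⟩ := hM μ hμ
    exact ⟨liftedStable_of_whrtStable h0 hinf (H μ hμ).1,
      liftedL2Gain_of_whrtL2Gain h0 hinf (H μ hμ).2⟩
  · intro H μ hμ
    obtain ⟨h0, hinf, hα⟩ := hM μ hμ
    obtain ⟨hstable, hgain⟩ := H _ ⟨μ, hμ, rfl⟩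
    exact ⟨whrtStable_of_liftedStable h0 hinf hα hstable,
      whrtL2Gain_of_liftedL2Gain h0 hinf hgain⟩

/-- the WHRT control system with zero strategy has ℓ2-performance with
gain γ w.r.t. the set M of loss sequences if and only if the lifted constrained
switched system has ℓ2-performance with gain γ w.r.t. {α(μ) : μ ∈ M}. -/
theorem stmt5
    (n m q p s : ℕ) (hs : 1 ≤ s)
    (A : Matrix (Fin n) (Fin n) ℝ) (B : Matrix (Fin n) (Fin m) ℝ)
    (Bw : Matrix (Fin n) (Fin q) ℝ) (C : Matrix (Fin p) (Fin n) ℝ)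
    (D : Matrix (Fin p) (Fin m) ℝ) (Dw : Matrix (Fin p) (Fin q) ℝ)
    (K : Matrix (Fin m) (Fin n) ℝ)
    (M : Set (ℕ → Fin 2))
    (hM : ∀ μ ∈ M, μ 0 = 1 ∧ {k | μ k = 1}.Infinite ∧ ∀ j, alphaSeq μ j ≤ s - 1)
    (γ : ℝ) (hγ : 0 < γ) :
    -- the WHRT control system with zero strategy has ℓ2-performance with gain γ w.r.t. M
    ((∀ μ ∈ M,
      (∀ x : ℕ → Fin n → ℝ,
          (∀ k, x (k + 1) =
            A.mulVec (x k) + ((μ k : ℕ) : ℝ) • (B * K).mulVec (x k)) →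
          Tendsto x atTop (nhds 0)) ∧
      (∀ (x : ℕ → Fin n → ℝ) (w : ℕ → Fin q → ℝ) (z : ℕ → Fin p → ℝ),
          x 0 = 0 →
          (∀ k, x (k + 1) =
            A.mulVec (x k) + ((μ k : ℕ) : ℝ) • (B * K).mulVec (x k) + Bw.mulVec (w k)) →
          (∀ k, z k =
            C.mulVec (x k) + ((μ k : ℕ) : ℝ) • (D * K).mulVec (x k) + Dw.mulVec (w k)) →
          0 < ∑' k, ENNReal.ofReal (∑ i, (w k i) ^ 2) →
          (∑' k, ENNReal.ofReal (∑ i, (w k i) ^ 2)) < ⊤ →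
          (∑' k, ENNReal.ofReal (∑ i, (z k i) ^ 2)) <
            ENNReal.ofReal γ ^ 2 * ∑' k, ENNReal.ofReal (∑ i, (w k i) ^ 2))))
    ↔
    -- the lifted constrained switched system has ℓ2-performance with gain γ
    -- w.r.t. the set of switching sequences {α(μ) : μ ∈ M}
    (∀ σ : ℕ → ℕ, (∃ μ ∈ M, σ = alphaSeq μ) →
      (∀ x : ℕ → Fin n → ℝ,
          (∀ k, x (k + 1) =
            (liftA A (σ k) + liftB A B (σ k) * K).mulVec (x k)) →
          Tendsto x atTop (nhds 0)) ∧
      (∀ (x : ℕ → Fin n → ℝ)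
          (w : (k : ℕ) → Fin (σ k + 1) × Fin q → ℝ)
          (z : (k : ℕ) → Fin (σ k + 1) × Fin p → ℝ),
          x 0 = 0 →
          (∀ k, x (k + 1) =
            (liftA A (σ k) + liftB A B (σ k) * K).mulVec (x k) +
            (liftBw A Bw (σ k)).mulVec (w k)) →
          (∀ k, z k =
            (liftC A C (σ k) + liftD A B C D (σ k) * K).mulVec (x k) +
            (liftDw A Bw C Dw (σ k)).mulVec (w k)) →
          0 < ∑' k, ENNReal.ofReal (∑ i, (w k i) ^ 2) →
          (∑' k, ENNReal.ofReal (∑ i, (w k i) ^ 2)) < ⊤ →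
          (∑' k, ENNReal.ofReal (∑ i, (z k i) ^ 2)) <
            ENNReal.ofReal γ ^ 2 * ∑' k, ENNReal.ofReal (∑ i, (w k i) ^ 2))) :=
  stmt5_general n m q p s A B Bw C D Dw K M hM γ
end
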